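/- arXiv:1812.09163 — 3 statements merged into one kernel-verified Lean document; each statement's English description precedes it below -/
import Mathlib

section
/- Let K be a real quadratic field and x, y ∈ K two irrational elements (i.e., not in ℚ). Then there exist a natural number k and elements x₀ = x, x₁, ..., x_k = y of K \ ℚ such that for each i, the ℤ-lattices Λ_{x_i} = ℤ·1 ⊕ ℤ·x_i and Λ_{x_{i+1}} satisfy: one is contained in the other with prime index. -/
/-!
Since `finrank ℚ K = 2` and `x` is irrational, `y = q x + r` with `q, r ∈ ℚ` and `q ≠ 0`, so it
suffices to connect `z` to `q z` and to `z + r` in the graph of Hecke neighbours on the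
irrational elements of `K`. For a prime `p`, `Λ_{pz}` has index `p` in `Λ_z`, so `z` and `p z`
are adjacent, and factoring `n` connects `z` to `n z`. As `Λ_{2z} = Λ_{-2z} = Λ_{2z + 2a}` for
`a ∈ ℤ`, both `-z` and `z + a` are joined to `z` through a common neighbour. Clearing
denominators then reaches `q z` and `z + r`.
-/

namespace Hecke

variable {K : Type*} [Field K]

def lattice (z : K) : Submodule ℤ K := Submodule.span ℤ {1, z}

def IsSublatticeOfIndex (n : ℕ) (S L : Submodule ℤ K) : Prop :=
  S ≤ L ∧ Nat.card (L ⧸ S.comap L.subtype) = n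

def IsHeckeNeighbor (a b : K) : Prop :=
  ∃ p : ℕ, p.Prime ∧
    (IsSublatticeOfIndex p (lattice a) (lattice b) ∨
      IsSublatticeOfIndex p (lattice b) (lattice a))

theorem IsSublatticeOfIndex.eq_one_of_self {n : ℕ} {L : Submodule ℤ K}
    (h : IsSublatticeOfIndex n L L) : n = 1 := by
  rw [← h.2, Submodule.comap_subtype_self]
  exact Nat.card_unique

theorem IsHeckeNeighbor.symm {a b : K} : IsHeckeNeighbor a b → IsHeckeNeighbor b a
  | ⟨p, hp, h⟩ => ⟨p, hp, h.symm⟩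

theorem not_isHeckeNeighbor_self (a : K) : ¬ IsHeckeNeighbor a a
  | ⟨_, hp, h⟩ => hp.ne_one (h.elim id id).eq_one_of_self

theorem mem_lattice_iff {z w : K} : w ∈ lattice z ↔ ∃ a b : ℤ, (a : K) + b * z = w := by
  simp [lattice, Submodule.mem_span_pair, zsmul_eq_mul]

theorem lattice_le_of_mem {z w : K} (h : w ∈ lattice z) : lattice w ≤ lattice z :=
  Submodule.span_le.2 <| Set.insert_subset_iff.2
    ⟨Submodule.subset_span (by simp), Set.singleton_subset_iff.2 h⟩

theorem lattice_add_intCast (z : K) (a : ℤ) : lattice (z + a) = lattice z :=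
  le_antisymm (lattice_le_of_mem (mem_lattice_iff.2 ⟨a, 1, by ring⟩))
    (lattice_le_of_mem (mem_lattice_iff.2 ⟨-a, 1, by push_cast; ring⟩))

theorem lattice_neg (z : K) : lattice (-z) = lattice z :=
  le_antisymm (lattice_le_of_mem (mem_lattice_iff.2 ⟨0, -1, by push_cast; ring⟩))
    (lattice_le_of_mem (mem_lattice_iff.2 ⟨0, -1, by push_cast; ring⟩))

variable [Algebra ℚ K]

theorem rat_mul_add_notMem_range {z : K} (hz : z ∉ Set.range (algebraMap ℚ K)) {q : ℚ}
    (hq : q ≠ 0) (r : ℚ) :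
    algebraMap ℚ K q * z + algebraMap ℚ K r ∉ Set.range (algebraMap ℚ K) := by
  rintro ⟨s, hs⟩
  refine hz ⟨(s - r) / q, ?_⟩
  have hqK : algebraMap ℚ K q ≠ 0 := (map_ne_zero _).2 hq
  rw [map_div₀, map_sub, hs, div_eq_iff hqK]
  ring

theorem intCast_mul_add_notMem_range {z : K} (hz : z ∉ Set.range (algebraMap ℚ K)) {n : ℤ}
    (hn : n ≠ 0) (a : ℤ) : (n : K) * z + a ∉ Set.range (algebraMap ℚ K) := by
  simpa using rat_mul_add_notMem_range hz (Int.cast_ne_zero.2 hn) a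

theorem natCast_mul_notMem_range {z : K} (hz : z ∉ Set.range (algebraMap ℚ K)) {n : ℕ}
    (hn : n ≠ 0) : (n : K) * z ∉ Set.range (algebraMap ℚ K) := by
  simpa using intCast_mul_add_notMem_range hz (Int.natCast_ne_zero.2 hn) 0

theorem rat_mul_notMem_range {z : K} (hz : z ∉ Set.range (algebraMap ℚ K)) {q : ℚ}
    (hq : q ≠ 0) : algebraMap ℚ K q * z ∉ Set.range (algebraMap ℚ K) := by
  simpa using rat_mul_add_notMem_range hz hq 0

theorem eq_zero_of_intCast_add_intCast_mul_eq_zero {z : K} (hz : z ∉ Set.range (algebraMap ℚ K))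
    {a b : ℤ} (h : (a : K) + b * z = 0) : b = 0 := by
  by_contra hb
  exact intCast_mul_add_notMem_range hz hb a ⟨0, by rw [map_zero, ← h, add_comm]⟩

theorem intCast_mul_mem_lattice_iff {z : K} (hz : z ∉ Set.range (algebraMap ℚ K)) (n : ℕ)
    (k : ℤ) : (k : K) * z ∈ lattice ((n : K) * z) ↔ (n : ℤ) ∣ k := by
  rw [mem_lattice_iff]
  constructor
  · rintro ⟨a, b, h⟩
    have hz_coeff : (a : K) + ((n * b - k : ℤ) : K) * z = 0 := by
      push_cast
      linear_combination h
    exact ⟨b, (sub_eq_zero.1 (eq_zero_of_intCast_add_intCast_mul_eq_zero hz hz_coeff)).symm⟩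
  · rintro ⟨b, rfl⟩
    exact ⟨0, b, by push_cast; ring⟩

theorem isSublatticeOfIndex_lattice_natCast_mul {z : K} (hz : z ∉ Set.range (algebraMap ℚ K))
    (n : ℕ) : IsSublatticeOfIndex n (lattice ((n : K) * z)) (lattice z) := by
  have hzL : z ∈ lattice z := mem_lattice_iff.2 ⟨0, 1, by simp⟩
  refine ⟨lattice_le_of_mem (mem_lattice_iff.2 ⟨0, n, by simp⟩), ?_⟩
  set S := (lattice ((n : K) * z)).comap (lattice z).subtype
  -- `k ↦ k z` maps `ℤ` onto `Λ_z / Λ_{nz}` with kernel `nℤ`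
  let g : ℤ →ₗ[ℤ] lattice z ⧸ S :=
    S.mkQ ∘ₗ LinearMap.toSpanSingleton ℤ (lattice z) ⟨z, hzL⟩
  have hg : Function.Surjective g := by
    intro c
    obtain ⟨⟨_, hv⟩, rfl⟩ := S.mkQ_surjective c
    obtain ⟨a, k, rfl⟩ := mem_lattice_iff.1 hv
    refine ⟨k, (Submodule.Quotient.eq S).2 ?_⟩
    simp only [S, Submodule.mem_comap, Submodule.coe_subtype]
    exact mem_lattice_iff.2 ⟨-a, 0, by simp [zsmul_eq_mul]⟩
  have hker : LinearMap.ker g = Ideal.span {(n : ℤ)} := by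
    ext k
    simp [g, S, Ideal.mem_span_singleton, Submodule.Quotient.mk_eq_zero, zsmul_eq_mul,
      intCast_mul_mem_lattice_iff hz]
  rw [← Nat.card_zmod n]
  exact Nat.card_congr ((g.quotKerEquivOfSurjective hg).symm.toEquiv.trans
    ((Submodule.quotEquivOfEq _ _ hker).toEquiv.trans (Int.quotientSpanNatEquivZMod n).toEquiv))

variable (K) in
def heckeGraph : SimpleGraph K where
  Adj a b :=
    a ∉ Set.range (algebraMap ℚ K) ∧ b ∉ Set.range (algebraMap ℚ K) ∧ IsHeckeNeighbor a b
  symm := ⟨fun _ _ h => ⟨h.2.1, h.1, h.2.2.symm⟩⟩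
  loopless := ⟨fun a h => not_isHeckeNeighbor_self a h.2.2⟩

theorem heckeGraph_adj {a b : K} : (heckeGraph K).Adj a b ↔
    a ∉ Set.range (algebraMap ℚ K) ∧ b ∉ Set.range (algebraMap ℚ K) ∧ IsHeckeNeighbor a b :=
  Iff.rfl

theorem heckeGraph_adj_natCast_mul {z : K} (hz : z ∉ Set.range (algebraMap ℚ K)) {p : ℕ}
    (hp : p.Prime) : (heckeGraph K).Adj z ((p : K) * z) :=
  heckeGraph_adj.2 ⟨hz, natCast_mul_notMem_range hz hp.ne_zero, p, hp,
    Or.inr (isSublatticeOfIndex_lattice_natCast_mul hz p)⟩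

theorem heckeGraph_adj_of_lattice_eq {a b b' : K} (h : (heckeGraph K).Adj a b)
    (hb' : b' ∉ Set.range (algebraMap ℚ K)) (hbb' : lattice b = lattice b') :
    (heckeGraph K).Adj a b' :=
  heckeGraph_adj.2 ⟨h.1, hb', by simpa only [IsHeckeNeighbor, hbb'] using h.2.2⟩

theorem heckeGraph_reachable_of_lattice_two_mul_eq {z w : K}
    (hz : z ∉ Set.range (algebraMap ℚ K)) (hw : w ∉ Set.range (algebraMap ℚ K))
    (h : lattice (2 * z) = lattice (2 * w)) : (heckeGraph K).Reachable z w := by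
  have hz2 := heckeGraph_adj_natCast_mul hz Nat.prime_two
  have hw2 := heckeGraph_adj_natCast_mul hw Nat.prime_two
  push_cast at hz2 hw2
  exact (heckeGraph_adj_of_lattice_eq hz2 hw2.2.1 h).reachable.trans hw2.reachable.symm

theorem heckeGraph_reachable_neg {z : K} (hz : z ∉ Set.range (algebraMap ℚ K)) :
    (heckeGraph K).Reachable z (-z) :=
  heckeGraph_reachable_of_lattice_two_mul_eq hz
    (by simpa using intCast_mul_add_notMem_range hz (n := -1) (by norm_num) 0)
    (by rw [mul_neg, lattice_neg])

theorem heckeGraph_reachable_add_intCast {z : K} (hz : z ∉ Set.range (algebraMap ℚ K))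
    (a : ℤ) : (heckeGraph K).Reachable z (z + a) :=
  heckeGraph_reachable_of_lattice_two_mul_eq hz
    (by simpa using intCast_mul_add_notMem_range hz one_ne_zero a)
    (by rw [mul_add, ← Int.cast_two, ← Int.cast_mul, lattice_add_intCast])

theorem heckeGraph_reachable_natCast_mul {z : K} (hz : z ∉ Set.range (algebraMap ℚ K)) {n : ℕ}
    (hn : n ≠ 0) : (heckeGraph K).Reachable z ((n : K) * z) := by
  induction n using Nat.recOnMul generalizing z with
  | zero => exact absurd rfl hn
  | one => simp
  | prime p hp => exact (heckeGraph_adj_natCast_mul hz hp).reachable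
  | mul a b iha ihb =>
    have ha : a ≠ 0 := left_ne_zero_of_mul hn
    have hab := (iha hz ha).trans
      (ihb (natCast_mul_notMem_range hz ha) (right_ne_zero_of_mul hn))
    rwa [← mul_assoc, mul_comm (b : K), ← Nat.cast_mul] at hab

theorem heckeGraph_reachable_intCast_mul {z : K} (hz : z ∉ Set.range (algebraMap ℚ K)) {n : ℤ}
    (hn : n ≠ 0) : (heckeGraph K).Reachable z ((n : K) * z) := by
  obtain ⟨m, rfl | rfl⟩ := Int.eq_nat_or_neg n
  · simpa using heckeGraph_reachable_natCast_mul hz (n := m) (by omega)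
  · have hm : m ≠ 0 := by omega
    simpa using (heckeGraph_reachable_natCast_mul hz hm).trans
      (heckeGraph_reachable_neg (natCast_mul_notMem_range hz hm))

theorem natCast_den_mul_algebraMap (q : ℚ) : (q.den : K) * algebraMap ℚ K q = q.num := by
  rw [mul_comm, ← map_natCast (algebraMap ℚ K), ← map_mul, Rat.mul_den_eq_num, map_intCast]

theorem heckeGraph_reachable_rat_mul {z : K} (hz : z ∉ Set.range (algebraMap ℚ K)) {q : ℚ}
    (hq : q ≠ 0) : (heckeGraph K).Reachable z (algebraMap ℚ K q * z) := by
  have h := heckeGraph_reachable_natCast_mul (rat_mul_notMem_range hz hq) q.den_ne_zero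
  rw [← mul_assoc, natCast_den_mul_algebraMap] at h
  exact (heckeGraph_reachable_intCast_mul hz (Rat.num_ne_zero.2 hq)).trans h.symm

theorem heckeGraph_reachable_add_rat {z : K} (hz : z ∉ Set.range (algebraMap ℚ K)) (r : ℚ) :
    (heckeGraph K).Reachable z (z + algebraMap ℚ K r) := by
  have hzr : z + algebraMap ℚ K r ∉ Set.range (algebraMap ℚ K) := by
    simpa using rat_mul_add_notMem_range hz one_ne_zero r
  have h := heckeGraph_reachable_natCast_mul hzr r.den_ne_zero
  rw [mul_add, natCast_den_mul_algebraMap] at h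
  have hdz := natCast_mul_notMem_range hz r.den_ne_zero
  exact (heckeGraph_reachable_natCast_mul hz r.den_ne_zero).trans
    ((heckeGraph_reachable_add_intCast hdz r.num).trans h.symm)

theorem heckeGraph_reachable_rat_mul_add {z : K} (hz : z ∉ Set.range (algebraMap ℚ K)) {q : ℚ}
    (hq : q ≠ 0) (r : ℚ) :
    (heckeGraph K).Reachable z (algebraMap ℚ K q * z + algebraMap ℚ K r) :=
  (heckeGraph_reachable_rat_mul hz hq).trans
    (heckeGraph_reachable_add_rat (rat_mul_notMem_range hz hq) r)

theorem exists_eq_rat_mul_add (h2 : Module.finrank ℚ K = 2) {x : K}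
    (hx : x ∉ Set.range (algebraMap ℚ K)) (y : K) :
    ∃ q r : ℚ, y = algebraMap ℚ K q * x + algebraMap ℚ K r := by
  have hli : LinearIndependent ℚ ![1, x] :=
    (LinearIndependent.pair_iff' one_ne_zero).2 fun a ha =>
      hx ⟨a, by rw [Algebra.algebraMap_eq_smul_one, ha]⟩
  have hy : y ∈ Submodule.span ℚ (Set.range ![1, x]) := by
    rw [hli.span_eq_top_of_card_eq_finrank (by simp [h2])]
    trivial
  obtain ⟨c, hc⟩ := (Submodule.mem_span_range_iff_exists_fun ℚ).1 hy
  refine ⟨c 1, c 0, ?_⟩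
  simp [← hc, Fin.sum_univ_two, Algebra.smul_def, add_comm]

end Hecke

theorem stmt_9_general (K : Type*) [Field K] [Algebra ℚ K]
    (h2 : Module.finrank ℚ K = 2)
    (x y : K)
    (hx : x ∉ Set.range (algebraMap ℚ K)) (hy : y ∉ Set.range (algebraMap ℚ K)) :
    ∃ (k : ℕ) (c : ℕ → K), c 0 = x ∧ c k = y ∧
      (∀ i ≤ k, c i ∉ Set.range (algebraMap ℚ K)) ∧
      ∀ i < k, ∃ p : ℕ, p.Prime ∧
        ((Submodule.span ℤ ({1, c i} : Set K) ≤ Submodule.span ℤ ({1, c (i + 1)} : Set K) ∧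
            Nat.card ((Submodule.span ℤ ({1, c (i + 1)} : Set K)) ⧸
              ((Submodule.span ℤ ({1, c i} : Set K)).comap
                (Submodule.span ℤ ({1, c (i + 1)} : Set K)).subtype)) = p) ∨
         (Submodule.span ℤ ({1, c (i + 1)} : Set K) ≤ Submodule.span ℤ ({1, c i} : Set K) ∧
            Nat.card ((Submodule.span ℤ ({1, c i} : Set K)) ⧸
              ((Submodule.span ℤ ({1, c (i + 1)} : Set K)).comap
                (Submodule.span ℤ ({1, c i} : Set K)).subtype)) = p)) := by
  obtain ⟨q, r, rfl⟩ := Hecke.exists_eq_rat_mul_add h2 hx y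
  have hq : q ≠ 0 := by
    rintro rfl
    exact hy ⟨r, by simp⟩
  obtain ⟨w⟩ := Hecke.heckeGraph_reachable_rat_mul_add hx hq r
  refine ⟨w.length, w.getVert, w.getVert_zero, w.getVert_length, ?_,
    fun i hi => (w.adj_getVert_succ hi).2.2⟩
  rintro (_ | i) hi
  · rwa [w.getVert_zero]
  · exact (w.adj_getVert_succ (Nat.lt_of_succ_le hi)).2.1

/-- Let `K` be a real quadratic field and `x, y ∈ K` two irrational elements. Then there
exist `k ∈ ℕ` and elements `x₀ = x, x₁, …, x_k = y` of `K \ ℚ` such that for each `i` the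
`ℤ`-lattices `Λ_{x_i} = ℤ·1 + ℤ·x_i` and `Λ_{x_{i+1}}` satisfy: one is contained in the
other with prime index (`p_i`-Hecke neighbors). -/
theorem stmt_9 (K : Type*) [Field K] [Algebra ℚ K] [FiniteDimensional ℚ K]
    (h2 : Module.finrank ℚ K = 2) (σ : K →+* ℝ)
    (x y : K)
    (hx : x ∉ Set.range (algebraMap ℚ K)) (hy : y ∉ Set.range (algebraMap ℚ K)) :
    ∃ (k : ℕ) (c : ℕ → K), c 0 = x ∧ c k = y ∧
      (∀ i ≤ k, c i ∉ Set.range (algebraMap ℚ K)) ∧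
      ∀ i < k, ∃ p : ℕ, p.Prime ∧
        ((Submodule.span ℤ ({1, c i} : Set K) ≤ Submodule.span ℤ ({1, c (i + 1)} : Set K) ∧
            Nat.card ((Submodule.span ℤ ({1, c (i + 1)} : Set K)) ⧸
              ((Submodule.span ℤ ({1, c i} : Set K)).comap
                (Submodule.span ℤ ({1, c (i + 1)} : Set K)).subtype)) = p) ∨
         (Submodule.span ℤ ({1, c (i + 1)} : Set K) ≤ Submodule.span ℤ ({1, c i} : Set K) ∧
            Nat.card ((Submodule.span ℤ ({1, c i} : Set K)) ⧸
              ((Submodule.span ℤ ({1, c (i + 1)} : Set K)).comap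
                (Submodule.span ℤ ({1, c i} : Set K)).subtype)) = p)) :=
  stmt_9_general K h2 x y hx hy
end

section
/- Let x, y ∈ K \ ℚ be p-Hecke neighbors in a real quadratic field K (i.e., Λ_y ⊆ Λ_x with index p, where Λ_z = ℤ + ℤz). Then for every unit α ∈ O_x^× there exists an integer 1 ≤ ℓ ≤ p+1 such that α^ℓ ∈ O_y^×, where O_z = {a ∈ K : a·Λ_z ⊆ Λ_z}. -/
/-!
Multiplication by a unit `α` of `O_x` is an automorphism of `Λ_x ≅ ℤ²`, so it permutes the
sublattices of index `p` of `Λ_x`. There are at most `p + 1` of them: each contains `pΛ_x`, hence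
is determined by its image in `Λ_x / pΛ_x`, a subgroup of order `p` of a group of order `p²`; and
distinct subgroups of order `p` have disjoint sets of nonzero elements. So the orbit of `Λ_y`
under `α` has at most `p + 1` elements, and some `α ^ ℓ` with `1 ≤ ℓ ≤ p + 1` maps `Λ_y` onto
itself.
-/

open Module Finset
open scoped Pointwise

namespace AddSubgroup

variable {V : Type*} [AddGroup V] {p : ℕ}

theorem inf_eq_bot_of_card_eq_prime (hp : p.Prime) {H K : AddSubgroup V}
    (hH : Nat.card H = p) (hK : Nat.card K = p) (hHK : H ≠ K) : H ⊓ K = ⊥ := by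
  have : Finite H := Nat.finite_of_card_ne_zero (hH ▸ hp.ne_zero)
  have : Finite K := Nat.finite_of_card_ne_zero (hK ▸ hp.ne_zero)
  rcases (Nat.dvd_prime hp).1 (hH ▸ card_dvd_of_le inf_le_left) with h | h
  · exact card_eq_one.1 h
  · have hH' : H ⊓ K = H := eq_of_le_of_card_ge inf_le_left (by rw [h, hH])
    have hK' : H ⊓ K = K := eq_of_le_of_card_ge inf_le_right (by rw [h, hK])
    exact absurd (hH'.symm.trans hK') hHK

theorem encard_setOf_card_eq_prime_le [Finite V] (hp : p.Prime) (hV : Nat.card V = p ^ 2) :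
    {H : AddSubgroup V | Nat.card H = p}.encard ≤ p + 1 := by
  classical
  have : Fintype V := Fintype.ofFinite V
  have hS := Set.toFinite {H : AddSubgroup V | Nat.card H = p}
  let nonzero : AddSubgroup V → Finset V := fun H => (univ.filter (· ∈ H)).erase 0
  have hcard : ∀ H ∈ hS.toFinset, #(nonzero H) = p - 1 := by
    intro H hH
    rw [Set.Finite.mem_toFinset] at hH
    rw [card_erase_of_mem (by simp [H.zero_mem]), ← Fintype.card_subtype,
      ← Nat.card_eq_fintype_card, hH]
  have hdisj : (hS.toFinset : Set (AddSubgroup V)).PairwiseDisjoint nonzero := by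
    intro H hH K hK hHK
    rw [Set.Finite.coe_toFinset] at hH hK
    rw [Function.onFun, disjoint_left]
    intro v hvH hvK
    simp only [nonzero, mem_erase, mem_filter, mem_univ, true_and] at hvH hvK
    have : v ∈ H ⊓ K := ⟨hvH.2, hvK.2⟩
    rw [inf_eq_bot_of_card_eq_prime hp hH hK hHK] at this
    exact hvH.1 this
  have hle : #(hS.toFinset.biUnion nonzero) ≤ #(univ.erase (0 : V)) :=
    card_le_card fun v hv => by
      obtain ⟨H, -, hv⟩ := mem_biUnion.1 hv
      exact mem_erase.2 ⟨(mem_erase.1 hv).1, mem_univ v⟩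
  rw [card_biUnion hdisj, sum_const_nat hcard, card_erase_of_mem (mem_univ 0), card_univ,
    ← Nat.card_eq_fintype_card, hV, show p ^ 2 - 1 = (p + 1) * (p - 1) by
      simpa using Nat.sq_sub_sq p 1] at hle
  rw [hS.encard_eq_coe_toFinset_card]
  exact_mod_cast Nat.le_of_mul_le_mul_right hle (Nat.sub_pos_of_lt hp.one_lt)

theorem encard_setOf_index_eq_prime_le {M : Type*} [AddCommGroup M] (hp : p.Prime)
    (hM : (nsmulAddMonoidHom (α := M) p).range.index = p ^ 2) :
    {N : AddSubgroup M | N.index = p}.encard ≤ p + 1 := by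
  set P := (nsmulAddMonoidHom (α := M) p).range
  let π := QuotientAddGroup.mk' P
  have hπ : Function.Surjective π := QuotientAddGroup.mk'_surjective P
  have hcardV : Nat.card (M ⧸ P) = p ^ 2 := by rw [← index_eq_card, hM]
  have : Finite (M ⧸ P) :=
    Nat.finite_of_card_ne_zero (hcardV ▸ pow_ne_zero 2 hp.ne_zero)
  have hker : ∀ N ∈ {N : AddSubgroup M | N.index = p}, π.ker ≤ N := by
    intro N hN
    rw [QuotientAddGroup.ker_mk']
    rintro - ⟨m, rfl⟩
    exact hN ▸ N.nsmul_index_mem m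
  have hmaps : Set.MapsTo (map π) {N | N.index = p} {H | Nat.card H = p} := by
    intro N hN
    have h := card_mul_index (N.map π)
    rw [index_map_eq N hπ (hker N hN), hN, hcardV, sq] at h
    exact Nat.eq_of_mul_eq_mul_right hp.pos h
  have hinj : Set.InjOn (map π) {N | N.index = p} := by
    intro N hN N' hN' h
    have := congrArg (comap π) h
    rwa [comap_map_eq, comap_map_eq, sup_of_le_left (hker N hN),
      sup_of_le_left (hker N' hN')] at this
  calc {N : AddSubgroup M | N.index = p}.encard
      = (map π '' {N | N.index = p}).encard := hinj.encard_image.symm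
    _ ≤ {H : AddSubgroup (M ⧸ P) | Nat.card H = p}.encard :=
        Set.encard_le_encard hmaps.image_subset
    _ ≤ p + 1 := encard_setOf_card_eq_prime_le hp hcardV

theorem encard_setOf_relIndex_eq_prime_le {G : Type*} [AddCommGroup G] (hp : p.Prime)
    (L : AddSubgroup G) (hL : (L.map (nsmulAddMonoidHom p)).relIndex L = p ^ 2) :
    {N : AddSubgroup G | N ≤ L ∧ N.relIndex L = p}.encard ≤ p + 1 := by
  have hinj : Set.InjOn (·.addSubgroupOf L) {N | N ≤ L ∧ N.relIndex L = p} := by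
    intro N hN N' hN' h
    rwa [addSubgroupOf_inj, inf_of_le_left hN.1, inf_of_le_left hN'.1] at h
  have hmaps : Set.MapsTo (·.addSubgroupOf L) {N | N ≤ L ∧ N.relIndex L = p}
      {N | N.index = p} := fun N hN => hN.2
  have hM : (nsmulAddMonoidHom (α := L) p).range.index = p ^ 2 := by
    rwa [relIndex, addSubgroupOf_map_nsmulAddMonoidHom_eq_range] at hL
  calc {N : AddSubgroup G | N ≤ L ∧ N.relIndex L = p}.encard
      = ((·.addSubgroupOf L) '' {N | N ≤ L ∧ N.relIndex L = p}).encard :=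
        hinj.encard_image.symm
    _ ≤ {N : AddSubgroup L | N.index = p}.encard := Set.encard_le_encard hmaps.image_subset
    _ ≤ p + 1 := encard_setOf_index_eq_prime_le hp hM

theorem pointwise_smul_eq_self_iff {A : Type*} [AddGroup A] {G : Type*} [Group G]
    [DistribMulAction G A] {g : G} {S : AddSubgroup A} :
    g • S = S ↔ (∀ v ∈ S, g • v ∈ S) ∧ ∀ v ∈ S, g⁻¹ • v ∈ S := by
  rw [le_antisymm_iff]
  refine and_congr ?_ ?_
  · exact Set.smul_set_subset_iff
  · exact forall₂_congr fun v _ => mem_pointwise_smul_iff_inv_smul_mem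

end AddSubgroup

theorem MulAction.exists_pow_smul_eq_of_encard_le {G β : Type*} [Group G] [MulAction G β]
    {g : G} {S : Set β} {k : ℕ} (hS : S.encard ≤ k) (hgS : Set.MapsTo (g • ·) S S)
    {b : β} (hb : b ∈ S) : ∃ ℓ, 1 ≤ ℓ ∧ ℓ ≤ k ∧ g ^ ℓ • b = b := by
  have hfin := Set.finite_of_encard_le_coe hS
  have hpow : ∀ n : ℕ, g ^ n • b ∈ S := by
    intro n
    induction n with
    | zero => simpa using hb
    | succ n ih => rw [pow_succ', mul_smul]; exact hgS ih
  have hlt : #hfin.toFinset < #(range (k + 1)) := by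
    rw [card_range, Nat.lt_succ_iff, ← Nat.cast_le (α := ℕ∞), ← hfin.encard_eq_coe_toFinset_card]
    exact hS
  obtain ⟨m, hm, n, hn, hmn, h⟩ := exists_ne_map_eq_of_card_lt_of_maps_to hlt
    (f := fun n => g ^ n • b) fun n _ => hfin.mem_toFinset.2 (hpow n)
  have of_lt : ∀ m n, m < n → n ≤ k → g ^ m • b = g ^ n • b →
      ∃ ℓ, 1 ≤ ℓ ∧ ℓ ≤ k ∧ g ^ ℓ • b = b := by
    intro m n hmn hn h
    refine ⟨n - m, by omega, by omega, ?_⟩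
    rw [← Nat.add_sub_of_le hmn.le, pow_add, mul_smul, smul_left_cancel_iff] at h
    exact h.symm
  rw [mem_range, Nat.lt_succ_iff] at hm hn
  rcases lt_or_gt_of_ne hmn with hlt | hlt
  · exact of_lt m n hlt hn h
  · exact of_lt n m hlt hm h.symm

theorem linearIndependent_one_of_notMem_range_algebraMap {K : Type*} [Field K] [Algebra ℚ K]
    {x : K} (hx : x ∉ Set.range (algebraMap ℚ K)) : LinearIndependent ℤ ![(1 : K), x] := by
  have : CharZero K := charZero_of_injective_algebraMap (algebraMap ℚ K).injective
  rw [LinearIndependent.pair_iff]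
  intro a b hab
  rw [zsmul_eq_mul, zsmul_eq_mul, mul_one] at hab
  obtain rfl | hb := eq_or_ne b 0
  · simpa using hab
  · refine absurd ⟨-a / b, ?_⟩ hx
    rw [map_div₀, map_neg, map_intCast, map_intCast, div_eq_iff (Int.cast_ne_zero.2 hb)]
    linear_combination -hab

theorem relIndex_map_nsmul_span_pair {K : Type*} [Field K] [Algebra ℚ K] {x : K}
    (hx : x ∉ Set.range (algebraMap ℚ K)) (p : ℕ) :
    ((Submodule.span ℤ {1, x}).toAddSubgroup.map (nsmulAddMonoidHom p)).relIndex
      (Submodule.span ℤ {1, x}).toAddSubgroup = p ^ 2 := by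
  have hli := linearIndependent_one_of_notMem_range_algebraMap hx
  have hrange : Set.range ![(1 : K), x] = {1, x} := Matrix.range_cons_cons_empty 1 x ![]
  have hrank : finrank ℤ (Submodule.span ℤ {(1 : K), x}) = 2 := by
    rw [← hrange, finrank_span_eq_card hli, Fintype.card_fin]
  have : Free ℤ (AddSubgroup.toIntSubmodule (Submodule.span ℤ {(1 : K), x}).toAddSubgroup) := by
    rw [Submodule.toAddSubgroup_toIntSubmodule, ← hrange]
    exact Free.of_basis (Basis.span hli)
  have : Module.Finite ℤ
      (AddSubgroup.toIntSubmodule (Submodule.span ℤ {(1 : K), x}).toAddSubgroup) := by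
    rw [Submodule.toAddSubgroup_toIntSubmodule, ← hrange]
    exact Module.Finite.of_basis (Basis.span hli)
  rw [AddSubgroup.relIndex_map_nsmul]
  exact congrArg (p ^ ·) hrank

theorem stmt_10_general (K : Type*) [Field K] [Algebra ℚ K]
    (p : ℕ) (hp : p.Prime)
    (x y : K)
    (hx : x ∉ Set.range (algebraMap ℚ K))
    (hsub : Submodule.span ℤ ({1, y} : Set K) ≤ Submodule.span ℤ ({1, x} : Set K))
    (hidx : Nat.card ((Submodule.span ℤ ({1, x} : Set K)) ⧸
        ((Submodule.span ℤ ({1, y} : Set K)).comap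
          (Submodule.span ℤ ({1, x} : Set K)).subtype)) = p)
    (α : K)
    (hα : ∀ v ∈ Submodule.span ℤ ({1, x} : Set K), α * v ∈ Submodule.span ℤ ({1, x} : Set K))
    (hαinv : ∀ v ∈ Submodule.span ℤ ({1, x} : Set K),
      α⁻¹ * v ∈ Submodule.span ℤ ({1, x} : Set K)) :
    ∃ ℓ : ℕ, 1 ≤ ℓ ∧ ℓ ≤ p + 1 ∧
      (∀ v ∈ Submodule.span ℤ ({1, y} : Set K), α ^ ℓ * v ∈ Submodule.span ℤ ({1, y} : Set K)) ∧
      (∀ v ∈ Submodule.span ℤ ({1, y} : Set K),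
        (α ^ ℓ)⁻¹ * v ∈ Submodule.span ℤ ({1, y} : Set K)) := by
  -- `α = 0` satisfies the hypotheses, as `0⁻¹ = 0` in a field.
  obtain rfl | hα0 := eq_or_ne α 0
  · exact ⟨1, le_rfl, by omega, fun v _ => by simp, fun v _ => by simp⟩
  let X := (Submodule.span ℤ ({1, x} : Set K)).toAddSubgroup
  let Y := (Submodule.span ℤ ({1, y} : Set K)).toAddSubgroup
  let u := Units.mk0 α hα0
  have huX : u • X = X :=
    AddSubgroup.pointwise_smul_eq_self_iff.2 ⟨by simpa [X, u, Units.smul_def] using hα,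
      by simpa [X, u, Units.smul_def] using hαinv⟩
  let S : Set (AddSubgroup K) := {N | N ≤ X ∧ N.relIndex X = p}
  have hmaps : Set.MapsTo (u • ·) S S := by
    rintro N ⟨hNX, hN⟩
    refine ⟨huX ▸ AddSubgroup.pointwise_smul_le_pointwise_smul_iff.2 hNX, ?_⟩
    change (u • N).relIndex X = p
    rw [← huX]
    exact (AddSubgroup.relIndex_pointwise_smul u N X).trans hN
  obtain ⟨ℓ, hℓ1, hℓp, hfix⟩ := MulAction.exists_pow_smul_eq_of_encard_le
    (AddSubgroup.encard_setOf_relIndex_eq_prime_le hp X (relIndex_map_nsmul_span_pair hx p))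
    hmaps (b := Y) ⟨hsub, hidx⟩
  obtain ⟨hYℓ, hYℓinv⟩ := AddSubgroup.pointwise_smul_eq_self_iff.1 hfix
  exact ⟨ℓ, hℓ1, hℓp, by simpa [Y, u, Units.smul_def] using hYℓ,
    by simpa [Y, u, Units.smul_def] using hYℓinv⟩

/-- Let `x, y ∈ K \ ℚ` be `p`-Hecke neighbors in a real quadratic field `K`
(i.e. `Λ_y ⊆ Λ_x` with index `p`, where `Λ_z = ℤ + ℤz`). Then for every unit
`α ∈ O_x^×` there exists an integer `1 ≤ ℓ ≤ p + 1` such that `α^ℓ ∈ O_y^×`,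
where `O_z = {a ∈ K : a·Λ_z ⊆ Λ_z}`. -/
theorem stmt_10 (K : Type*) [Field K] [Algebra ℚ K] [FiniteDimensional ℚ K]
    (h2 : Module.finrank ℚ K = 2) (σ : K →+* ℝ)
    (p : ℕ) (hp : p.Prime)
    (x y : K)
    (hx : x ∉ Set.range (algebraMap ℚ K)) (hy : y ∉ Set.range (algebraMap ℚ K))
    (hsub : Submodule.span ℤ ({1, y} : Set K) ≤ Submodule.span ℤ ({1, x} : Set K))
    (hidx : Nat.card ((Submodule.span ℤ ({1, x} : Set K)) ⧸
        ((Submodule.span ℤ ({1, y} : Set K)).comap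
          (Submodule.span ℤ ({1, x} : Set K)).subtype)) = p)
    (α : K)
    (hα : ∀ v ∈ Submodule.span ℤ ({1, x} : Set K), α * v ∈ Submodule.span ℤ ({1, x} : Set K))
    (hαinv : ∀ v ∈ Submodule.span ℤ ({1, x} : Set K),
      α⁻¹ * v ∈ Submodule.span ℤ ({1, x} : Set K)) :
    ∃ ℓ : ℕ, 1 ≤ ℓ ∧ ℓ ≤ p + 1 ∧
      (∀ v ∈ Submodule.span ℤ ({1, y} : Set K), α ^ ℓ * v ∈ Submodule.span ℤ ({1, y} : Set K)) ∧
      (∀ v ∈ Submodule.span ℤ ({1, y} : Set K),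
        (α ^ ℓ)⁻¹ * v ∈ Submodule.span ℤ ({1, y} : Set K)) :=
  stmt_10_general K p hp x y hx hsub hidx α hα hαinv
end

section
/- Let x, y ∈ K \ ℚ be p-Hecke neighbors in a real quadratic field K. Let l_z denote the unique positive integer such that O_z = ℤ[l_z · x_D], where ℤ[x_D] is the maximal order of K. Then l_y divides p·l_x and l_x divides p·l_y; in particular (1/p)·l_y ≤ l_x ≤ p·l_y. -/
/-! Since `Λ_y ⊆ Λ_x` has index `p`, we have `p Λ_x ⊆ Λ_y ⊆ Λ_x`, hence `p O_x ⊆ O_y` and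
`p O_y ⊆ O_x`. As `x_D` satisfies a monic quadratic over `ℤ`, the order `ℤ[l x_D]` is
`ℤ + ℤ l x_D`, and since `1, x_D` are linearly independent, `p l_x x_D ∈ ℤ + ℤ l_y x_D`
forces `l_y ∣ p l_x`. -/

open Submodule Polynomial

section SubmoduleIndex

variable {R M : Type*} [Ring R] [AddCommGroup M] [Module R M]

theorem Submodule.nsmul_mem_of_card_quotient_comap_eq {Λ Λ' : Submodule R M} {n : ℕ}
    (hcard : Nat.card (Λ ⧸ Λ'.comap Λ.subtype) = n) {v : M} (hv : v ∈ Λ) :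
    n • v ∈ Λ' := by
  have hzero : n • (Submodule.Quotient.mk (⟨v, hv⟩ : Λ) : Λ ⧸ Λ'.comap Λ.subtype) = 0 := by
    rw [← hcard]; exact card_nsmul_eq_zero'
  rw [← Submodule.Quotient.mk_smul, Submodule.Quotient.mk_eq_zero] at hzero
  exact hzero

end SubmoduleIndex

section Multipliers

variable {A : Type*} [CommRing A] {M N : Submodule ℤ A} {c a : A}

theorem Submodule.mul_mem_div_self_of_le (hNM : N ≤ M) (hMN : ∀ v ∈ M, c * v ∈ N)
    (ha : a ∈ M / M) : c * a ∈ N / N :=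
  mem_div_iff_forall_mul_mem.mpr fun v hv => by
    rw [mul_assoc]; exact hMN _ (mem_div_iff_forall_mul_mem.mp ha v (hNM hv))

theorem Submodule.mul_mem_div_self_of_le' (hNM : N ≤ M) (hMN : ∀ v ∈ M, c * v ∈ N)
    (ha : a ∈ N / N) : c * a ∈ M / M :=
  mem_div_iff_forall_mul_mem.mpr fun v hv => by
    rw [mul_comm c, mul_assoc]; exact hNM (mem_div_iff_forall_mul_mem.mp ha _ (hMN v hv))

end Multipliers

section PairSpan

variable {A : Type*} [CommRing A] {R : Type*} [CommRing R] [Algebra R A] {t : A}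

theorem mul_self_mem_span_pair_of_natDegree_minpoly_eq_two (ht : IsIntegral R t)
    (hdeg : (minpoly R t).natDegree = 2) : t * t ∈ span R ({1, t} : Set A) := by
  have hlead : (minpoly R t).coeff 2 = 1 := by
    simpa [Polynomial.leadingCoeff, hdeg] using (minpoly.monic ht).leadingCoeff
  have hroot := minpoly.aeval R t
  rw [aeval_eq_sum_range' (n := 3) (by omega)] at hroot
  simp only [Finset.sum_range_succ, Finset.sum_range_zero, hlead, one_smul] at hroot
  rw [mem_span_pair]
  refine ⟨-(minpoly R t).coeff 0, -(minpoly R t).coeff 1, ?_⟩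
  rw [pow_zero, pow_one, zero_add, sq] at hroot
  linear_combination (norm := module) -hroot

theorem mul_mem_span_pair_of_mul_self_mem (ht : t * t ∈ span R ({1, t} : Set A)) {u v : A}
    (hu : u ∈ span R ({1, t} : Set A)) (hv : v ∈ span R ({1, t} : Set A)) :
    u * v ∈ span R ({1, t} : Set A) := by
  have hmul : span R ({1, t} : Set A) * span R {1, t} ≤ span R {1, t} := by
    rw [span_mul_span, span_le]
    rintro _ ⟨a, ha, b, hb, rfl⟩
    rcases ha with rfl | rfl <;> rcases hb with rfl | rfl <;> simp only [one_mul, mul_one] <;>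
      first | exact ht | exact subset_span (by simp)
  exact hmul (mul_mem_mul hu hv)

theorem adjoin_le_span_pair_of_mul_self_mem (ht : t * t ∈ span R ({1, t} : Set A)) :
    Subalgebra.toSubmodule (Algebra.adjoin R {t}) ≤ span R ({1, t} : Set A) := by
  let S := (span R ({1, t} : Set A)).toSubalgebra (subset_span (by simp))
    fun _ _ => mul_mem_span_pair_of_mul_self_mem ht
  exact Algebra.adjoin_le (S := S) (Set.singleton_subset_iff.mpr (subset_span (by simp)))

theorem mul_self_mem_span_pair_smul (ht : t * t ∈ span R ({1, t} : Set A)) (l : R) :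
    (l • t) * (l • t) ∈ span R ({1, l • t} : Set A) := by
  obtain ⟨a, b, hab⟩ := mem_span_pair.mp ht
  exact mem_span_pair.mpr ⟨l ^ 2 * a, l * b, by
    rw [smul_mul_smul_comm, ← hab]; module⟩

end PairSpan

section QuadraticField

variable {K : Type*} [Field K] [Algebra ℚ K] {t : K}

theorem notMem_range_algebraMap_of_adjoin_eq_integralClosure [FiniteDimensional ℚ K]
    (ht : Algebra.adjoin ℤ {t} = integralClosure ℤ K) {x : K}
    (hx : x ∉ Set.range (algebraMap ℚ K)) : t ∉ Set.range (algebraMap ℚ K) := by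
  rintro ⟨q, rfl⟩
  obtain ⟨n, hn, hnx⟩ := ((IsFractionRing.isAlgebraic_iff ℤ ℚ K).mpr
    (Algebra.IsAlgebraic.isAlgebraic x)).exists_integral_multiple
  have hle : Algebra.adjoin ℤ {algebraMap ℚ K q} ≤ (⊥ : Subalgebra ℚ K).restrictScalars ℤ :=
    Algebra.adjoin_le (by simp)
  have hnx' : (n : ℚ) • x ∈ (⊥ : Subalgebra ℚ K) := by
    rw [Int.cast_smul_eq_zsmul]
    exact hle (ht ▸ (hnx : n • x ∈ integralClosure ℤ K))
  apply hx
  rw [← Algebra.mem_bot]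
  simpa [smul_smul, hn] using Subalgebra.smul_mem _ hnx' (n : ℚ)⁻¹

theorem eq_zero_of_intCast_add_mul_eq_zero (ht : t ∉ Set.range (algebraMap ℚ K)) {m c : ℤ}
    (h : (m : K) + c * t = 0) : c = 0 := by
  have : CharZero K := Algebra.charZero_of_charZero ℚ K
  by_contra hc
  have hcK : (c : K) ≠ 0 := by exact_mod_cast hc
  refine ht ⟨-m / c, ?_⟩
  rw [map_div₀, map_neg, map_intCast, map_intCast, div_eq_iff hcK]
  linear_combination -h

theorem natDegree_minpoly_int_eq_two (h2 : Module.finrank ℚ K = 2) (hint : IsIntegral ℤ t)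
    (ht : t ∉ Set.range (algebraMap ℚ K)) : (minpoly ℤ t).natDegree = 2 := by
  have : FiniteDimensional ℚ K := Module.finite_of_finrank_eq_succ h2
  have hle : (minpoly ℚ t).natDegree ≤ 2 := h2 ▸ minpoly.natDegree_le t
  have hge : 2 ≤ (minpoly ℚ t).natDegree :=
    (minpoly.two_le_natDegree_iff (Algebra.IsIntegral.isIntegral t)).mpr ht
  rw [minpoly.isIntegrallyClosed_eq_field_fractions' ℚ hint,
    natDegree_map_eq_of_injective (algebraMap ℤ ℚ).injective_int] at hle hge
  omega

theorem dvd_of_intCast_mul_mem_adjoin (ht : t ∉ Set.range (algebraMap ℚ K))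
    (hsq : t * t ∈ span ℤ ({1, t} : Set K)) {k l : ℤ}
    (h : (k : K) * t ∈ Algebra.adjoin ℤ {(l : K) * t}) : l ∣ k := by
  have hsq' := mul_self_mem_span_pair_smul hsq l
  rw [zsmul_eq_mul] at hsq'
  obtain ⟨a, b, hab⟩ := mem_span_pair.mp (adjoin_le_span_pair_of_mul_self_mem hsq' h)
  rw [zsmul_eq_mul, zsmul_eq_mul, mul_one] at hab
  have hcoeff : l * b - k = 0 := eq_zero_of_intCast_add_mul_eq_zero ht (m := a) (by
    push_cast
    linear_combination hab)
  exact ⟨b, by linarith⟩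

end QuadraticField

theorem stmt_11_general (K : Type*) [Field K] [Algebra ℚ K] [FiniteDimensional ℚ K]
    (h2 : Module.finrank ℚ K = 2)
    (xD : K) (hmax : Algebra.adjoin ℤ {xD} = integralClosure ℤ K)
    (p : ℕ) (hp : p.Prime)
    (x y : K)
    (hx : x ∉ Set.range (algebraMap ℚ K))
    (hsub : Submodule.span ℤ ({1, y} : Set K) ≤ Submodule.span ℤ ({1, x} : Set K))
    (hidx : Nat.card ((Submodule.span ℤ ({1, x} : Set K)) ⧸
        ((Submodule.span ℤ ({1, y} : Set K)).comap
          (Submodule.span ℤ ({1, x} : Set K)).subtype)) = p)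
    (lx ly : ℕ) (hlx : 0 < lx) (hly : 0 < ly)
    (hOx : {a : K | ∀ v ∈ Submodule.span ℤ ({1, x} : Set K),
        a * v ∈ Submodule.span ℤ ({1, x} : Set K)} =
      (Algebra.adjoin ℤ ({(lx : K) * xD} : Set K) : Set K))
    (hOy : {a : K | ∀ v ∈ Submodule.span ℤ ({1, y} : Set K),
        a * v ∈ Submodule.span ℤ ({1, y} : Set K)} =
      (Algebra.adjoin ℤ ({(ly : K) * xD} : Set K) : Set K)) :
    ly ∣ p * lx ∧ lx ∣ p * ly ∧ ly ≤ p * lx ∧ lx ≤ p * ly := by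
  have hxD := notMem_range_algebraMap_of_adjoin_eq_integralClosure hmax hx
  have hint : IsIntegral ℤ xD := (hmax ▸ Algebra.self_mem_adjoin_singleton ℤ xD :
    xD ∈ integralClosure ℤ K)
  have hsq := mul_self_mem_span_pair_of_natDegree_minpoly_eq_two hint
    (natDegree_minpoly_int_eq_two h2 hint hxD)
  have hscale : ∀ v ∈ span ℤ ({1, x} : Set K), (p : K) * v ∈ span ℤ ({1, y} : Set K) :=
    fun v hv => by simpa [nsmul_eq_mul] using nsmul_mem_of_card_quotient_comap_eq hidx hv
  have hcolon (Λ : Submodule ℤ K) : {a : K | ∀ v ∈ Λ, a * v ∈ Λ} = ↑(Λ / Λ) := by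
    ext; exact mem_div_iff_forall_mul_mem.symm
  rw [hcolon] at hOx hOy
  have hdvd {l l' : ℕ} {O' : Set K} (hO' : O' = Algebra.adjoin ℤ {(l' : K) * xD})
      (hmem : (p : K) * ((l : K) * xD) ∈ O') : l' ∣ p * l := by
    rw [hO', ← mul_assoc] at hmem
    exact_mod_cast dvd_of_intCast_mul_mem_adjoin hxD hsq (k := p * l) (l := l')
      (by exact_mod_cast hmem)
  have hgen {l : ℕ} {O : Set K} (hO : O = Algebra.adjoin ℤ {(l : K) * xD}) : (l : K) * xD ∈ O :=
    hO ▸ Algebra.self_mem_adjoin_singleton ℤ _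
  have hyx : ly ∣ p * lx := hdvd hOy (mul_mem_div_self_of_le hsub hscale (hgen hOx))
  have hxy : lx ∣ p * ly := hdvd hOx (mul_mem_div_self_of_le' hsub hscale (hgen hOy))
  exact ⟨hyx, hxy, Nat.le_of_dvd (Nat.mul_pos hp.pos hlx) hyx,
    Nat.le_of_dvd (Nat.mul_pos hp.pos hly) hxy⟩

/-- Let `x, y ∈ K \ ℚ` be `p`-Hecke neighbors in a real quadratic field `K` with maximal
order `ℤ[x_D]`. Let `l_z` denote the unique positive integer such that
`O_z = ℤ[l_z·x_D]`, where `O_z` is the multiplier ring of `Λ_z = ℤ + ℤz`. Then `l_y ∣ p·l_x`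
and `l_x ∣ p·l_y`; in particular `(1/p)·l_y ≤ l_x ≤ p·l_y`. -/
theorem stmt_11 (K : Type*) [Field K] [Algebra ℚ K] [FiniteDimensional ℚ K]
    (h2 : Module.finrank ℚ K = 2) (σ : K →+* ℝ)
    (xD : K) (hmax : Algebra.adjoin ℤ {xD} = integralClosure ℤ K)
    (p : ℕ) (hp : p.Prime)
    (x y : K)
    (hx : x ∉ Set.range (algebraMap ℚ K)) (hy : y ∉ Set.range (algebraMap ℚ K))
    (hsub : Submodule.span ℤ ({1, y} : Set K) ≤ Submodule.span ℤ ({1, x} : Set K))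
    (hidx : Nat.card ((Submodule.span ℤ ({1, x} : Set K)) ⧸
        ((Submodule.span ℤ ({1, y} : Set K)).comap
          (Submodule.span ℤ ({1, x} : Set K)).subtype)) = p)
    (lx ly : ℕ) (hlx : 0 < lx) (hly : 0 < ly)
    (hOx : {a : K | ∀ v ∈ Submodule.span ℤ ({1, x} : Set K),
        a * v ∈ Submodule.span ℤ ({1, x} : Set K)} =
      (Algebra.adjoin ℤ ({(lx : K) * xD} : Set K) : Set K))
    (hOy : {a : K | ∀ v ∈ Submodule.span ℤ ({1, y} : Set K),
        a * v ∈ Submodule.span ℤ ({1, y} : Set K)} =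
      (Algebra.adjoin ℤ ({(ly : K) * xD} : Set K) : Set K)) :
    ly ∣ p * lx ∧ lx ∣ p * ly ∧ ly ≤ p * lx ∧ lx ≤ p * ly :=
  stmt_11_general K h2 xD hmax p hp x y hx hsub hidx lx ly hlx hly hOx hOy
end
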